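/- arXiv:2605.19517 — 5 statements merged into one kernel-verified Lean document; each statement's English description precedes it below -/
import Mathlib

section
/- Let p be a prime with p ≡ 1 (mod 4) and n = (p−1)/2. Set x_r = χ(r)·ζ^{−r} for 1 ≤ r ≤ n, and define X_{−1} = 1, X_0 = 0, X_r = x_r (1 ≤ r ≤ n). Then 1 + X_r·X_s ≠ 0 for all −1 ≤ r, s ≤ n, and the determinant I = det[(X_r + X_s)/(1 + X_r·X_s)]_{−1≤r,s≤n} of this (n+2)×(n+2) complex matrix equals (−1)^{(p+3)/4} · ∏_{r=1}^n (1 − x_r)² · ∏_{1≤r<s≤n} (x_r − x_s)² · (∏_{r,s=1}^n (1 + x_r·x_s))^{−1} · ∏_{r=1}^n x_r². -/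
open Complex Matrix BigOperators Finset

lemma cauchy_det : ∀ (N : ℕ) (u v : ℕ → ℂ), (∀ i j, i < N → j < N → 1 + u i * v j ≠ 0) →
    (Matrix.of fun i j : Fin N => (1 + u (i : ℕ) * v (j : ℕ))⁻¹).det
    = (∏ j ∈ Finset.range N, ∏ i ∈ Finset.range j, ((u j - u i) * (v i - v j)))
      / ∏ i ∈ Finset.range N, ∏ j ∈ Finset.range N, (1 + u i * v j) := by
  intro N
  induction N with
  | zero => intro u v h; simp [Matrix.det_isEmpty]
  | succ N IH =>
    intro u v h
    have h00 : 1 + u 0 * v 0 ≠ 0 := h 0 0 (Nat.succ_pos N) (Nat.succ_pos N)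
    -- step 1 : row operations
    set B : Matrix (Fin (N+1)) (Fin (N+1)) ℂ := Matrix.of fun i j =>
      if i = (0 : Fin (N+1)) then (1 + u 0 * v (j:ℕ))⁻¹
      else (u 0 - u (i:ℕ)) * v (j:ℕ) * ((1 + u (i:ℕ) * v (j:ℕ))⁻¹ * (1 + u 0 * v (j:ℕ))⁻¹)
      with hB
    have step1 : (Matrix.of fun i j : Fin (N+1) => (1 + u (i : ℕ) * v (j : ℕ))⁻¹).det = B.det := by
      apply Matrix.det_eq_of_forall_row_eq_smul_add_const
        (fun i : Fin (N+1) => if i = 0 then 0 else 1) 0 (by simp)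
      intro i j
      by_cases hi : i = (0 : Fin (N+1))
      · subst hi; simp [hB]
      · simp only [hB, Matrix.of_apply, if_neg hi, one_mul, Fin.val_zero, if_pos rfl, ↓reduceIte]
        have h1 : 1 + u (i:ℕ) * v (j:ℕ) ≠ 0 := h _ _ i.isLt j.isLt
        have h2 : 1 + u 0 * v (j:ℕ) ≠ 0 := h _ _ (Nat.succ_pos N) j.isLt
        field_simp
        linear_combination (-1 : ℂ) * mul_inv_cancel₀ h2
    -- step 2 : column operations
    set E : Matrix (Fin (N+1)) (Fin (N+1)) ℂ := Matrix.of fun i j =>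
      if j = (0 : Fin (N+1)) then B i 0
      else if i = (0 : Fin (N+1)) then 0
      else (u 0 - u (i:ℕ)) * (v (j:ℕ) - v 0) *
        ((1 + u (i:ℕ) * v (j:ℕ))⁻¹ * ((1 + u 0 * v (j:ℕ))⁻¹ * (1 + u (i:ℕ) * v 0)⁻¹))
      with hE
    have step2 : B.det = E.det := by
      rw [← Matrix.det_transpose B, ← Matrix.det_transpose E]
      apply Matrix.det_eq_of_forall_row_eq_smul_add_const
        (fun j : Fin (N+1) => if j = 0 then 0 else (1 + u 0 * v (j:ℕ))⁻¹ * (1 + u 0 * v 0)) 0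
        (by simp)
      intro j i
      simp only [Matrix.transpose_apply]
      by_cases hj : j = (0 : Fin (N+1))
      · subst hj; simp [hE]
      · have hEi0 : E i 0 = B i 0 := by simp [hE]
        simp only [if_neg hj, hEi0]
        have h2 : 1 + u 0 * v (j:ℕ) ≠ 0 := h _ _ (Nat.succ_pos N) j.isLt
        by_cases hi : i = (0 : Fin (N+1))
        · subst hi
          simp only [hE, hB, Matrix.of_apply, if_neg hj, if_pos rfl, Fin.val_zero, ↓reduceIte]
          field_simp
          ring
        · have h1 : 1 + u (i:ℕ) * v (j:ℕ) ≠ 0 := h _ _ i.isLt j.isLt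
          have h3 : 1 + u (i:ℕ) * v 0 ≠ 0 := h _ _ i.isLt (Nat.succ_pos N)
          simp only [hE, hB, Matrix.of_apply, if_neg hj, if_neg hi, if_pos rfl, Fin.val_zero]
          field_simp
          ring
    -- step 3 : expand along row 0
    have hE00 : E 0 0 = (1 + u 0 * v 0)⁻¹ := by simp [hE, hB]
    have step3 : E.det = (1 + u 0 * v 0)⁻¹ * (E.submatrix Fin.succ Fin.succ).det := by
      rw [Matrix.det_succ_row_zero]
      rw [Finset.sum_eq_single (0 : Fin (N+1))]
      · simp [hE00, Fin.succAbove_zero]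
      · intro j _ hj
        have : E 0 j = 0 := by simp [hE, hj]
        simp [this]
      · simp
    -- step 4 : minor as scaled Cauchy matrix
    have step4 : (E.submatrix Fin.succ Fin.succ) =
        (Matrix.diagonal (fun i : Fin N => (u 0 - u ((i:ℕ)+1)) * (1 + u ((i:ℕ)+1) * v 0)⁻¹)) *
        (Matrix.of fun i j : Fin N => (1 + u ((i:ℕ)+1) * v ((j:ℕ)+1))⁻¹) *
        (Matrix.diagonal (fun j : Fin N => (v ((j:ℕ)+1) - v 0) * (1 + u 0 * v ((j:ℕ)+1))⁻¹)) := by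
      ext i j
      rw [Matrix.mul_diagonal, Matrix.diagonal_mul]
      simp only [Matrix.submatrix_apply, Matrix.of_apply, hE, hB]
      rw [if_neg (Fin.succ_ne_zero j), if_neg (Fin.succ_ne_zero i)]
      simp only [Fin.val_succ]
      ring
    have step123 : (Matrix.of fun i j : Fin (N+1) => (1 + u (i : ℕ) * v (j : ℕ))⁻¹).det
        = (1 + u 0 * v 0)⁻¹ * (E.submatrix Fin.succ Fin.succ).det := by
      rw [step1, step2, step3]
    have hIH := IH (fun k => u (k+1)) (fun k => v (k+1))
      (fun i j hi hj => h (i+1) (j+1) (by omega) (by omega))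
    rw [step123, step4, Matrix.det_mul, Matrix.det_mul, Matrix.det_diagonal, Matrix.det_diagonal,
      hIH]
    rw [Fin.prod_univ_eq_prod_range (fun i => (u 0 - u (i+1)) * (1 + u (i+1) * v 0)⁻¹),
      Fin.prod_univ_eq_prod_range (fun j => (v (j+1) - v 0) * (1 + u 0 * v (j+1))⁻¹)]
    set PU := ∏ i ∈ range N, (u 0 - u (i+1)) with hPU
    set QU := ∏ i ∈ range N, (1 + u (i+1) * v 0) with hQU
    set PV := ∏ j ∈ range N, (v (j+1) - v 0) with hPV
    set QV := ∏ j ∈ range N, (1 + u 0 * v (j+1)) with hQV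
    set Num' := ∏ j ∈ range N, ∏ i ∈ range j, ((u (j+1) - u (i+1)) * (v (i+1) - v (j+1))) with hNum'
    set Den' := ∏ i ∈ range N, ∏ j ∈ range N, (1 + u (i+1) * v (j+1)) with hDen'
    have e1 : ∏ i ∈ range N, ((u 0 - u (i+1)) * (1 + u (i+1) * v 0)⁻¹) = PU * QU⁻¹ := by
      rw [Finset.prod_mul_distrib, hPU, hQU, ← Finset.prod_inv_distrib]
    have e2 : ∏ j ∈ range N, ((v (j+1) - v 0) * (1 + u 0 * v (j+1))⁻¹) = PV * QV⁻¹ := by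
      rw [Finset.prod_mul_distrib, hPV, hQV, ← Finset.prod_inv_distrib]
    have hNum : (∏ j ∈ range (N+1), ∏ i ∈ range j, ((u j - u i) * (v i - v j)))
        = Num' * (PU * PV) := by
      rw [Finset.prod_range_succ']
      simp only [Finset.range_zero, Finset.prod_empty, mul_one]
      calc ∏ j ∈ range N, ∏ i ∈ range (j+1), ((u (j+1) - u i) * (v i - v (j+1)))
          = ∏ j ∈ range N, ((∏ i ∈ range j, ((u (j+1) - u (i+1)) * (v (i+1) - v (j+1)))) *
              ((u 0 - u (j+1)) * (v (j+1) - v 0))) := by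
            refine Finset.prod_congr rfl fun j _ => ?_
            rw [Finset.prod_range_succ']
            congr 1; ring
        _ = Num' * (PU * PV) := by
            rw [Finset.prod_mul_distrib, Finset.prod_mul_distrib]
    have hDen : (∏ i ∈ range (N+1), ∏ j ∈ range (N+1), (1 + u i * v j))
        = (Den' * QU) * (QV * (1 + u 0 * v 0)) := by
      rw [Finset.prod_range_succ']
      congr 1
      · calc ∏ i ∈ range N, ∏ j ∈ range (N+1), (1 + u (i+1) * v j)
            = ∏ i ∈ range N, ((∏ j ∈ range N, (1 + u (i+1) * v (j+1))) * (1 + u (i+1) * v 0)) := by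
              refine Finset.prod_congr rfl fun i _ => ?_
              rw [Finset.prod_range_succ']
          _ = Den' * QU := by rw [Finset.prod_mul_distrib]
      · rw [Finset.prod_range_succ']
    have hQUne : QU ≠ 0 := Finset.prod_ne_zero_iff.mpr fun i hi =>
      h (i+1) 0 (by simp at hi; omega) (by omega)
    have hQVne : QV ≠ 0 := Finset.prod_ne_zero_iff.mpr fun j hj =>
      h 0 (j+1) (by omega) (by simp at hj; omega)
    have hDen'ne : Den' ≠ 0 := Finset.prod_ne_zero_iff.mpr fun i hi =>
      Finset.prod_ne_zero_iff.mpr fun j hj =>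
        h (i+1) (j+1) (by simp at hi; omega) (by simp at hj; omega)
    rw [e1, e2, hNum, hDen]
    field_simp


/-- Evaluation of the bordered diagonal Cauchy determinant `I`
with nodes `X₋₁ = 1, X₀ = 0, X_r = x_r = χ(r)ζ^{-r}`. -/
theorem stmt_8 (p : ℕ) [Fact p.Prime] (hp4 : p % 4 = 1)
    (n : ℕ) (hn : n = (p - 1) / 2)
    (ζ : ℂ) (hζ : ζ = Complex.exp (2 * Real.pi * Complex.I / p))
    (x : ℕ → ℂ)
    (hx : ∀ r : ℕ, x r = (legendreSym p (r : ℤ) : ℂ) * ζ ^ (-(r : ℤ)))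
    (X : Fin (n + 2) → ℂ)
    (hX : ∀ i : Fin (n + 2),
      X i = if (i : ℕ) = 0 then 1 else if (i : ℕ) = 1 then 0 else x ((i : ℕ) - 1)) :
    (∀ r s : Fin (n + 2), 1 + X r * X s ≠ 0) ∧
    (Matrix.of fun r s : Fin (n + 2) => (X r + X s) / (1 + X r * X s)).det
      = (-1 : ℂ) ^ ((p + 3) / 4)
        * (∏ r ∈ Finset.Icc 1 n, (1 - x r) ^ 2)
        * (∏ s ∈ Finset.Icc 1 n, ∏ r ∈ Finset.Ico 1 s, (x r - x s) ^ 2)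
        * (∏ r ∈ Finset.Icc 1 n, ∏ s ∈ Finset.Icc 1 n, (1 + x r * x s))⁻¹
        * ∏ r ∈ Finset.Icc 1 n, (x r) ^ 2 := by
  have hp : p.Prime := Fact.out
  have hp5 : 5 ≤ p := by have := hp.two_le; omega
  have hm : p = 4 * (p / 4) + 1 := by omega
  set m := p / 4 with hmdef
  have hnm : n = 2 * m := by omega
  have hζp : IsPrimitiveRoot ζ p := by rw [hζ]; exact Complex.isPrimitiveRoot_exp p (by omega)
  have hζ0 : ζ ≠ 0 := hζp.ne_zero (by omega)
  have hdvd : ∀ k : ℕ, 1 ≤ k → k ≤ p - 1 → ¬ ((p:ℤ) ∣ 2 * (k:ℤ)) := by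
    intro k h1 h2 hdv
    have : (p:ℤ) ∣ ((2 * k : ℕ) : ℤ) := by push_cast; exact hdv
    rw [Int.natCast_dvd_natCast] at this
    rcases (Nat.Prime.dvd_mul hp).mp this with h | h
    · have := Nat.le_of_dvd (by norm_num) h; omega
    · have := Nat.le_of_dvd (by omega) h; omega
  have hsq : ∀ a : ℕ, 1 ≤ a → a ≤ n → (x a)^2 = ζ ^ (-(2*(a:ℤ))) := by
    intro a h1 h2
    have hnd : ¬ (p ∣ a) := fun hd => by have := Nat.le_of_dvd (by omega) hd; omega
    have hz : ((a : ℤ) : ZMod p) ≠ 0 := by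
      rw [Int.cast_natCast, Ne, ZMod.natCast_eq_zero_iff]; exact hnd
    have hleg : (legendreSym p (a:ℤ) : ℂ)^2 = 1 := by
      have := legendreSym.sq_one p (a := (a:ℤ)) hz
      exact_mod_cast congrArg (fun z : ℤ => (z : ℂ)) this
    rw [hx a, mul_pow, hleg, one_mul, ← zpow_natCast (ζ ^ (-(a:ℤ))) 2, ← _root_.zpow_mul]
    ring_nf
  have hx1 : ∀ a : ℕ, 1 ≤ a → a ≤ n → 1 + x a ≠ 0 := by
    intro a h1 h2 heq
    have : x a = -1 := by linear_combination heq
    have h2' : (x a)^2 = 1 := by rw [this]; ring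
    rw [hsq a h1 h2] at h2'
    rw [hζp.zpow_eq_one_iff_dvd, dvd_neg] at h2'
    exact hdvd a h1 (by omega) h2'
  have hxx : ∀ a b : ℕ, 1 ≤ a → a ≤ n → 1 ≤ b → b ≤ n → 1 + x a * x b ≠ 0 := by
    intro a b ha1 ha2 hb1 hb2 heq
    have : x a * x b = -1 := by linear_combination heq
    have h2' : (x a)^2 * (x b)^2 = 1 := by rw [← mul_pow, this]; ring
    rw [hsq a ha1 ha2, hsq b hb1 hb2, ← zpow_add₀ hζ0] at h2'
    have h3 : (-(2*(a:ℤ)) + -(2*(b:ℤ))) = -(2*(((a+b : ℕ)):ℤ)) := by push_cast; ring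
    rw [h3, hζp.zpow_eq_one_iff_dvd, dvd_neg] at h2'
    exact hdvd (a+b) (by omega) (by omega) h2'
  -- classification of the nodes
  have hX0 : X 0 = 1 := by rw [hX]; simp
  have hxval : ∀ i : Fin (n+2), X i = 1 ∨ X i = 0 ∨ ∃ a, 1 ≤ a ∧ a ≤ n ∧ X i = x a := by
    intro i
    rw [hX i]
    by_cases h0 : (i:ℕ) = 0
    · left; simp [h0]
    by_cases h1 : (i:ℕ) = 1
    · right; left; simp [h0, h1]
    · right; right
      refine ⟨(i:ℕ) - 1, by omega, by have := i.isLt; omega, by simp [h0, h1]⟩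
  have part1 : ∀ r s : Fin (n+2), 1 + X r * X s ≠ 0 := by
    intro r s
    rcases hxval r with h | h | ⟨a, ha1, ha2, h⟩ <;>
      rcases hxval s with g | g | ⟨b, hb1, hb2, g⟩ <;> rw [h, g]
    · norm_num
    · norm_num
    · rw [one_mul]; exact hx1 b hb1 hb2
    · norm_num
    · norm_num
    · norm_num
    · rw [mul_one]; exact hx1 a ha1 ha2
    · norm_num
    · exact hxx a b ha1 ha2 hb1 hb2
  refine ⟨part1, ?_⟩
  -- the shifted node function
  set w : ℕ → ℂ := fun k => if k = 0 then 0 else x k with hw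
  have hXsucc : ∀ i : Fin (n+1), X i.succ = w (i:ℕ) := by
    intro i
    rw [hX]
    simp only [Fin.val_succ, hw]
    by_cases h0 : (i:ℕ) = 0
    · simp [h0]
    · have : ¬ ((i:ℕ) + 1 = 1) := by omega
      simp [h0, this]
  have hw_ne : ∀ i j, i < n+1 → j < n+1 → 1 + w i * w j ≠ 0 := by
    intro i j hi hj
    by_cases h0 : i = 0
    · simp [hw, h0]
    by_cases h1 : j = 0
    · simp [hw, h1]
    · simp only [hw, if_neg h0, if_neg h1]
      exact hxx i j (by omega) (by omega) (by omega) (by omega)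
  -- row reduction
  set M : Matrix (Fin (n+2)) (Fin (n+2)) ℂ :=
    Matrix.of (fun r s : Fin (n + 2) => (X r + X s) / (1 + X r * X s)) with hM
  set B1 : Matrix (Fin (n+2)) (Fin (n+2)) ℂ := Matrix.of (fun i j : Fin (n+2) =>
    if i = 0 then 1 else -(1 - X i) * (1 - X j) * (1 + X i * X j)⁻¹) with hB1
  have step1 : M.det = B1.det := by
    apply Matrix.det_eq_of_forall_row_eq_smul_add_const
      (fun i : Fin (n+2) => if i = 0 then 0 else 1) 0 (by simp)
    intro i j
    by_cases hi : i = (0 : Fin (n+2))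
    · subst hi
      have hj := part1 0 j
      rw [hX0, one_mul] at hj
      simp only [hM, hB1, Matrix.of_apply, if_pos rfl, hX0, one_mul]
      rw [div_self hj]
      norm_num
    · simp only [hM, hB1, Matrix.of_apply, if_neg hi, if_pos rfl, one_mul, ↓reduceIte]
      have h1 := part1 i j
      field_simp
      ring
  have step2 : B1.det = (B1.submatrix Fin.succ Fin.succ).det := by
    rw [Matrix.det_succ_column_zero]
    rw [Finset.sum_eq_single (0 : Fin (n+2))]
    · simp only [Fin.val_zero, pow_zero, one_mul, Fin.succAbove_zero]
      have : B1 0 0 = 1 := by simp [hB1]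
      rw [this, one_mul]
    · intro i _ hi
      have : B1 i 0 = 0 := by
        simp only [hB1, Matrix.of_apply, if_neg hi, hX0]
        ring
      rw [this]; ring
    · simp
  have step3 : (B1.submatrix Fin.succ Fin.succ) =
      (Matrix.diagonal (fun i : Fin (n+1) => -(1 - w (i:ℕ)))) *
      (Matrix.of fun i j : Fin (n+1) => (1 + w (i : ℕ) * w (j : ℕ))⁻¹) *
      (Matrix.diagonal (fun j : Fin (n+1) => (1 - w (j:ℕ)))) := by
    ext i j
    rw [Matrix.mul_diagonal, Matrix.diagonal_mul]
    simp only [Matrix.submatrix_apply, Matrix.of_apply, hB1]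
    rw [if_neg (Fin.succ_ne_zero i), hXsucc i, hXsucc j]
    ring
  rw [step1, step2, step3, Matrix.det_mul, Matrix.det_mul, Matrix.det_diagonal,
    Matrix.det_diagonal, cauchy_det (n+1) w w hw_ne,
    Fin.prod_univ_eq_prod_range (fun i => -(1 - w i)),
    Fin.prod_univ_eq_prod_range (fun j => (1 - w j))]
  -- product conversions
  have hIcc : ∀ f : ℕ → ℂ, ∏ r ∈ Finset.Icc 1 n, f r = ∏ i ∈ Finset.range n, f (i+1) := by
    intro f
    rw [← Finset.Ico_add_one_right_eq_Icc, Finset.prod_Ico_eq_prod_range]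
    exact Finset.prod_congr (by simp) fun i _ => by rw [add_comm]
  set Qx := ∏ r ∈ Finset.Icc 1 n, (1 - x r) with hQx
  set Bx := ∏ s ∈ Finset.Icc 1 n, ∏ r ∈ Finset.Ico 1 s, (x r - x s)^2 with hBx
  set Cx := ∏ r ∈ Finset.Icc 1 n, ∏ s ∈ Finset.Icc 1 n, (1 + x r * x s) with hCx
  set Dx := ∏ r ∈ Finset.Icc 1 n, (x r)^2 with hDx
  have e2 : ∏ i ∈ Finset.range (n+1), (1 - w i) = Qx := by
    rw [Finset.prod_range_succ', hQx, hIcc]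
    simp only [hw, if_pos rfl]
    rw [sub_zero, mul_one]
    exact Finset.prod_congr rfl fun i _ => by rw [if_neg (Nat.succ_ne_zero i)]
  have e1 : ∏ i ∈ Finset.range (n+1), (-(1 - w i)) = (-1:ℂ)^(n+1) * Qx := by
    have h' : ∀ i ∈ Finset.range (n+1), -(1 - w i) = (-1) * (1 - w i) := fun i _ => by ring
    rw [Finset.prod_congr rfl h', Finset.prod_mul_distrib, Finset.prod_const,
      Finset.card_range, e2]
  have e3 : (∏ j ∈ Finset.range (n+1), ∏ i ∈ Finset.range j, ((w j - w i) * (w i - w j)))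
      = (-1:ℂ)^(2*m*m + m) * (Bx * Dx) := by
    rw [Finset.prod_range_succ']
    simp only [Finset.range_zero, Finset.prod_empty, mul_one]
    have inner : ∀ j ∈ Finset.range n,
        ∏ i ∈ Finset.range (j+1), ((w (j+1) - w i) * (w i - w (j+1)))
        = ((-1:ℂ)^(j+1)) * ((∏ i ∈ Finset.range j, (x (i+1) - x (j+1))^2) * (x (j+1))^2) := by
      intro j _
      rw [Finset.prod_range_succ']
      have hterm : ∀ i ∈ Finset.range j,
          (w (j+1) - w (i+1)) * (w (i+1) - w (j+1)) = (-1) * (x (i+1) - x (j+1))^2 := by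
        intro i _
        simp only [hw, if_neg (Nat.succ_ne_zero i), if_neg (Nat.succ_ne_zero j)]
        ring
      rw [Finset.prod_congr rfl hterm, Finset.prod_mul_distrib, Finset.prod_const,
        Finset.card_range]
      simp only [hw, if_pos rfl, if_neg (Nat.succ_ne_zero j)]
      ring
    rw [Finset.prod_congr rfl inner, Finset.prod_mul_distrib, Finset.prod_mul_distrib]
    have hsign : ∏ j ∈ Finset.range n, ((-1:ℂ))^(j+1) = (-1:ℂ)^(2*m*m + m) := by
      rw [Finset.prod_pow_eq_pow_sum]
      congr 1
      have hE : ∑ j ∈ Finset.range n, (j+1) = ∑ i ∈ Finset.range (n+1), i := by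
        rw [Finset.sum_range_succ' (fun i => i) n]; simp
      have hE2 : (∑ j ∈ Finset.range n, (j+1)) * 2 = (2*m*m + m) * 2 := by
        rw [hE, Finset.sum_range_id_mul_two (n+1)]
        simp only [Nat.add_sub_cancel]
        rw [hnm]; ring
      exact Nat.eq_of_mul_eq_mul_right (by norm_num) hE2
    have hB' : ∏ j ∈ Finset.range n, ∏ i ∈ Finset.range j, (x (i+1) - x (j+1))^2 = Bx := by
      rw [hBx, hIcc (fun s => ∏ r ∈ Finset.Ico 1 s, (x r - x s)^2)]
      refine Finset.prod_congr rfl fun j _ => ?_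
      rw [Finset.prod_Ico_eq_prod_range]
      exact Finset.prod_congr (by simp) fun i _ => by rw [add_comm]
    have hD' : ∏ j ∈ Finset.range n, (x (j+1))^2 = Dx := by
      rw [hDx, hIcc (fun r => (x r)^2)]
    rw [hsign, hB', hD']
  have e4 : (∏ i ∈ Finset.range (n+1), ∏ j ∈ Finset.range (n+1), (1 + w i * w j)) = Cx := by
    rw [Finset.prod_range_succ']
    have h0 : ∏ j ∈ Finset.range (n+1), (1 + w 0 * w j) = 1 := by
      simp [hw]
    rw [h0, mul_one]
    have hinner : ∀ i ∈ Finset.range n,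
        ∏ j ∈ Finset.range (n+1), (1 + w (i+1) * w j)
        = ∏ j ∈ Finset.range n, (1 + x (i+1) * x (j+1)) := by
      intro i _
      rw [Finset.prod_range_succ']
      simp only [hw, if_pos rfl, if_neg (Nat.succ_ne_zero i)]
      rw [mul_zero, add_zero, mul_one]
      exact Finset.prod_congr rfl fun j _ => by rw [if_neg (Nat.succ_ne_zero j)]
    rw [Finset.prod_congr rfl hinner, hCx, hIcc (fun r => ∏ s ∈ Finset.Icc 1 n, (1 + x r * x s))]
    exact Finset.prod_congr rfl fun i _ => (hIcc (fun s => (1 + x (i+1) * x s))).symm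
  rw [e1, e2, e3, e4]
  have hCne : Cx ≠ 0 := by
    rw [hCx]
    refine Finset.prod_ne_zero_iff.mpr fun r hr => Finset.prod_ne_zero_iff.mpr fun s hs => ?_
    rw [Finset.mem_Icc] at hr hs
    exact hxx r s hr.1 hr.2 hs.1 hs.2
  have hp34 : (p + 3) / 4 = m + 1 := by omega
  have hQ2 : ∏ r ∈ Finset.Icc 1 n, (1 - x r)^2 = Qx^2 := by
    rw [hQx, ← Finset.prod_pow]
  rw [hp34, hQ2, hnm]
  have hsgn : (-1:ℂ)^(2*m+1) * (-1:ℂ)^(2*m*m + m) = (-1:ℂ)^(m+1) := by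
    rw [← pow_add, show 2*m+1 + (2*m*m + m) = (m+1) + 2*(m*m + m) from by ring,
      pow_add, pow_mul]
    norm_num
  rw [div_eq_mul_inv]
  linear_combination (Qx^2 * Bx * Dx * Cx⁻¹) * hsgn
end

section
/- Let p = 4m+1 be prime with m ≥ 1, and let a : {0,…,2m} → ZMod p satisfy a_i² ≠ a_j² for all i ≠ j. Then for all u, v ∈ ZMod p, the determinant of the (2m+1)×(2m+1) matrix over ZMod p with (i,j) entry χ(a_i + a_j) + χ(a_i − a_j) + u·χ(a_i² + v·a_j²) equals (−1)^{m(2m+1)} · u^{2m+1} · v^{m(2m+1)} · (∏_{r=0}^{2m} binom(2m, r)) · ∏_{0≤i<j≤2m} (a_j² − a_i²)², where the integer factors are reduced mod p. -/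
/-!
By Euler's criterion `χ x = x ^ (2 * m)` in `ZMod p`, so the `(i, j)` entry is the value at
`(a i, a j)` of `(x + y) ^ (2m) + (x - y) ^ (2m) + u (x² + v y²) ^ (2m)`, a bilinear form in the
monomials `x ^ (2s)` and `y ^ (2r)`. Hence the matrix is `V C Vᵀ` with `V` the Vandermonde matrix
of the `a i ^ 2` and `C` the coefficient matrix. `C` vanishes below its antidiagonal, on which
(as `m ≥ 1`) only `u (x² + v y²) ^ (2m)` contributes, with entries
`u * (2m choose s) * v ^ (2m - s)`.
-/

open Matrix BigOperators Finset

variable {R : Type*} [CommRing R]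

theorem Matrix.det_eq_neg_one_pow_mul_prod_rev {n : ℕ} (M : Matrix (Fin n) (Fin n) R)
    (hM : ∀ i j : Fin n, n ≤ (i : ℕ) + j → M i j = 0) :
    M.det = (-1) ^ n.choose 2 * ∏ i, M i i.rev := by
  induction n with
  | zero => simp
  | succ n ih =>
    rw [det_succ_row M (Fin.last n), Fintype.sum_eq_single 0 fun j hj => by
      rw [hM _ _ (by have := Fin.pos_of_ne_zero hj; simp only [Fin.val_last]; omega), mul_zero,
        zero_mul]]
    have hminor : (M.submatrix (Fin.last n).succAbove (Fin.succAbove 0)).det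
        = (-1) ^ n.choose 2 * ∏ i : Fin n, M i.castSucc i.rev.succ := by
      rw [ih (M.submatrix _ _) fun i j hij => hM _ _ (by
        simp only [Fin.succAbove_last, Fin.val_castSucc, Fin.zero_succAbove, Fin.val_succ]; omega)]
      simp [Fin.succAbove_last]
    rw [hminor, Fin.prod_univ_castSucc, Nat.choose_succ_succ, Nat.choose_one_right]
    simp only [Fin.rev_castSucc, Fin.rev_last, Fin.val_last, Fin.val_zero, pow_add]
    ring

theorem sum_range_two_mul_add_one_eq_sum_even {M : Type*} [AddCommMonoid M] (m : ℕ)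
    (f : ℕ → M) (hf : ∀ k ≤ 2 * m, Odd k → f k = 0) :
    ∑ k ∈ range (2 * m + 1), f k = ∑ s ∈ range (m + 1), f (2 * s) := by
  induction m with
  | zero => simp
  | succ m ih =>
    rw [show 2 * (m + 1) + 1 = 2 * m + 1 + 1 + 1 by ring, sum_range_succ, sum_range_succ,
      ih fun k hk => hf k (by omega), hf _ (by omega) (odd_two_mul_add_one m),
      sum_range_succ (n := m + 1)]
    simp [mul_add]

theorem add_pow_two_mul_add_sub_pow_two_mul (m : ℕ) (x y : R) :
    (x + y) ^ (2 * m) + (x - y) ^ (2 * m)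
      = ∑ s ∈ range (m + 1),
          2 * ((2 * m).choose (2 * s) : R) * (x ^ 2) ^ s * (y ^ 2) ^ (m - s) := by
  rw [add_pow, sub_eq_add_neg, add_pow, ← sum_add_distrib,
    sum_range_two_mul_add_one_eq_sum_even m _ fun k hk hodd => ?_]
  · refine sum_congr rfl fun s hs => ?_
    rw [show 2 * m - 2 * s = 2 * (m - s) by omega, pow_mul, pow_mul, pow_mul, neg_sq]
    ring
  · rw [(Nat.Even.sub_odd hk (even_two_mul m) hodd).neg_pow]
    ring

theorem sum_sum_pow_mul_ite_mul_pow {n k : ℕ} (hk : k < n) (c : ℕ → ℕ → R) (X Y : R) :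
    ∑ s : Fin n, ∑ r : Fin n,
        X ^ (s : ℕ) * (if (s : ℕ) + r = k then c s r else 0) * Y ^ (r : ℕ)
      = ∑ s ∈ range (k + 1), X ^ s * c s (k - s) * Y ^ (k - s) := by
  have hinner : ∀ s, ∑ r ∈ range n, X ^ s * (if s + r = k then c s r else 0) * Y ^ r
      = if s ≤ k then X ^ s * c s (k - s) * Y ^ (k - s) else 0 := fun s => by
    split_ifs with hs
    · rw [sum_eq_single (k - s) (fun r _ hr => by rw [if_neg (by omega)]; ring)
        (fun h => absurd (mem_range.mpr (by omega)) h), if_pos (by omega)]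
    · exact sum_eq_zero fun r _ => by rw [if_neg (by omega)]; ring
  rw [Fin.sum_univ_eq_sum_range (fun s => ∑ r : Fin n,
    X ^ s * (if s + (r : ℕ) = k then c s r else 0) * Y ^ (r : ℕ))]
  simp_rw [fun s : ℕ => Fin.sum_univ_eq_sum_range
    (fun r => X ^ s * (if s + r = k then c s r else 0) * Y ^ r) n, hinner]
  rw [← sum_filter]
  congr 1
  ext s
  simp only [mem_filter, mem_range]
  omega

def coeffMatrix (m : ℕ) (u v : R) : Matrix (Fin (2 * m + 1)) (Fin (2 * m + 1)) R :=
  of fun s r =>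
    (if (s : ℕ) + r = m then 2 * ((2 * m).choose (2 * s) : R) else 0)
      + (if (s : ℕ) + r = 2 * m then u * (2 * m).choose s * v ^ (r : ℕ) else 0)

theorem add_pow_add_sub_pow_add_mul_pow_eq_sum_coeffMatrix (m : ℕ) (u v x y : R) :
    (x + y) ^ (2 * m) + (x - y) ^ (2 * m) + u * (x ^ 2 + v * y ^ 2) ^ (2 * m)
      = ∑ s : Fin (2 * m + 1), ∑ r : Fin (2 * m + 1),
          (x ^ 2) ^ (s : ℕ) * coeffMatrix m u v s r * (y ^ 2) ^ (r : ℕ) := by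
  simp only [coeffMatrix, of_apply, mul_add, add_mul, sum_add_distrib]
  rw [sum_sum_pow_mul_ite_mul_pow (c := fun s _ => 2 * ((2 * m).choose (2 * s) : R)) (by omega),
    sum_sum_pow_mul_ite_mul_pow (c := fun s r => u * (2 * m).choose s * v ^ r) (by omega),
    add_pow_two_mul_add_sub_pow_two_mul, add_pow, mul_sum]
  congr 1
  · exact sum_congr rfl fun s _ => by ring
  · exact sum_congr rfl fun s _ => by rw [mul_pow]; ring

theorem Nat.choose_two_two_mul_add_one (m : ℕ) : (2 * m + 1).choose 2 = m * (2 * m + 1) := by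
  rw [Nat.choose_two_right, Nat.add_sub_cancel, show (2 * m + 1) * (2 * m) = m * (2 * m + 1) * 2 by
    ring, Nat.mul_div_cancel _ two_pos]

theorem det_coeffMatrix {m : ℕ} (hm : 1 ≤ m) (u v : R) :
    (coeffMatrix m u v).det
      = (-1) ^ (m * (2 * m + 1)) * u ^ (2 * m + 1) * v ^ (m * (2 * m + 1))
        * ∏ r ∈ range (2 * m + 1), ((2 * m).choose r : R) := by
  have hantidiag : ∀ s : Fin (2 * m + 1), coeffMatrix m u v s s.rev
      = u * (2 * m).choose s * v ^ (s.rev : ℕ) := fun s => by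
    simp only [coeffMatrix, of_apply, Fin.val_rev]
    rw [if_neg (by omega), if_pos (by omega), zero_add]
  rw [det_eq_neg_one_pow_mul_prod_rev _ fun s r hsr => by
      simp only [coeffMatrix, of_apply]; rw [if_neg (by omega), if_neg (by omega), add_zero],
    Fintype.prod_congr _ _ hantidiag, prod_mul_distrib,
    Fintype.prod_equiv Fin.revPerm (fun s => v ^ (s.rev : ℕ)) (fun s => v ^ (s : ℕ)) (by simp),
    prod_mul_distrib, Fin.prod_univ_eq_prod_range (fun s => ((2 * m).choose s : R)),
    Fin.prod_univ_eq_prod_range (fun s => v ^ s), prod_pow_eq_pow_sum, sum_range_id,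
    ← Nat.choose_two_right, Nat.choose_two_two_mul_add_one]
  simp only [prod_const, card_univ, Fintype.card_fin]
  ring

theorem Matrix.eq_vandermonde_mul_mul_transpose {n : ℕ} (M C : Matrix (Fin n) (Fin n) R)
    (b : Fin n → R)
    (h : ∀ i j, M i j = ∑ s : Fin n, ∑ r : Fin n, b i ^ (s : ℕ) * C s r * b j ^ (r : ℕ)) :
    M = vandermonde b * C * (vandermonde b)ᵀ := by
  ext i j
  simp only [h, mul_apply, transpose_apply, vandermonde_apply, sum_mul]
  exact sum_comm

theorem Matrix.det_vandermonde_sq {n : ℕ} (b : Fin n → R) :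
    (vandermonde b).det ^ 2 = ∏ j, ∏ i ∈ univ.filter (· < j), (b j - b i) ^ 2 := by
  rw [det_vandermonde, ← prod_pow]
  simp only [← prod_pow]
  exact prod_comm' fun i j => by simp [and_comm]

theorem ZMod.quadraticChar_eq_pow {p : ℕ} [Fact p.Prime] (hp : p ≠ 2) (x : ZMod p) :
    ((quadraticChar (ZMod p) x : ℤ) : ZMod p) = x ^ (p / 2) := by
  rw [quadraticChar_eq_pow_of_char_ne_two' (by rwa [ZMod.ringChar_zmod_n]), ZMod.card]

theorem stmt_12_general (m : ℕ) (hm : 1 ≤ m) (p : ℕ) (hpm : p = 4 * m + 1) [Fact p.Prime]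
    (χ : ZMod p → ZMod p)
    (hχ : ∀ x : ZMod p, χ x = ((quadraticChar (ZMod p) x : ℤ) : ZMod p))
    (a : Fin (2 * m + 1) → ZMod p)
    (u v : ZMod p) :
    (Matrix.of fun i j : Fin (2 * m + 1) =>
        χ (a i + a j) + χ (a i - a j) + u * χ (a i ^ 2 + v * a j ^ 2)).det
      = (-1 : ZMod p) ^ (m * (2 * m + 1)) * u ^ (2 * m + 1) * v ^ (m * (2 * m + 1))
        * ((∏ r ∈ Finset.range (2 * m + 1), Nat.choose (2 * m) r : ℕ) : ZMod p)
        * ∏ j : Fin (2 * m + 1), ∏ i ∈ Finset.univ.filter (fun i : Fin (2 * m + 1) => i < j),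
            (a j ^ 2 - a i ^ 2) ^ 2 := by
  have hχ_pow : ∀ x, χ x = x ^ (2 * m) := fun x => by
    rw [hχ, ZMod.quadraticChar_eq_pow (by omega), show p / 2 = 2 * m by omega]
  rw [eq_vandermonde_mul_mul_transpose (of _) (coeffMatrix m u v) (fun i => a i ^ 2) fun i j => by
      simp only [of_apply, hχ_pow]
      exact add_pow_add_sub_pow_add_mul_pow_eq_sum_coeffMatrix m u v (a i) (a j),
    det_mul, det_mul, det_transpose, det_coeffMatrix hm, Nat.cast_prod, ← det_vandermonde_sq]
  ring

/-- Uniform exact congruence for the determinant in Sun's Conjecture 4.10(i),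
over any half-system modulo sign and all parameters `u, v ∈ 𝔽_p`. -/
theorem stmt_12 (m : ℕ) (hm : 1 ≤ m) (p : ℕ) (hpm : p = 4 * m + 1) [Fact p.Prime]
    (χ : ZMod p → ZMod p)
    (hχ : ∀ x : ZMod p, χ x = ((quadraticChar (ZMod p) x : ℤ) : ZMod p))
    (a : Fin (2 * m + 1) → ZMod p)
    (ha : ∀ i j : Fin (2 * m + 1), i ≠ j → a i ^ 2 ≠ a j ^ 2)
    (u v : ZMod p) :
    (Matrix.of fun i j : Fin (2 * m + 1) =>
        χ (a i + a j) + χ (a i - a j) + u * χ (a i ^ 2 + v * a j ^ 2)).det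
      = (-1 : ZMod p) ^ (m * (2 * m + 1)) * u ^ (2 * m + 1) * v ^ (m * (2 * m + 1))
        * ((∏ r ∈ Finset.range (2 * m + 1), Nat.choose (2 * m) r : ℕ) : ZMod p)
        * ∏ j : Fin (2 * m + 1), ∏ i ∈ Finset.univ.filter (fun i : Fin (2 * m + 1) => i < j),
            (a j ^ 2 - a i ^ 2) ^ 2 :=
  stmt_12_general m hm p hpm χ hχ a u v
end

section
/- Let p = 4m+1 be prime with m ≥ 1 and let δ₁, δ₂ ∈ {1, −1}. Then the integer determinant D = det[(j+k / p) + (j−k / p) + δ₁·(j²+δ₂k² / p)]_{0≤j,k≤2m}, where (· / p) denotes the Legendre symbol, satisfies the congruence D ≡ (−1)^{m(2m+1)} · δ₁^{2m+1} · δ₂^{m(2m+1)} · (∏_{r=0}^{2m} binom(2m, r)) · ∏_{0≤i<j≤2m} (j² − i²)² (mod p). -/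
/-!
By Euler's criterion `(t / p) ≡ t ^ 2m (mod p)`, so modulo `p` the matrix is `[K(j, k)]` for
`K(X, Y) = (X + Y) ^ 2m + (X - Y) ^ 2m + δ₁ (X² + δ₂ Y²) ^ 2m`. Both parts of `K` are
polynomials in `X²` and `Y²`, whence `[K(x_j, x_k)] = V C Vᵀ` with `V` the Vandermonde matrix
of the `x_j²` and `C` the coefficient matrix. The first part is supported on the antidiagonal
`a + b = m`, the second on `a + b = 2m`; as `m ≥ 1`, `C` vanishes below the antidiagonal
`a + b = 2m`, on which its entries are `δ₁ δ₂ ^ b binom(2m, b)`. Hence `det C` is the sign of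
the reversal permutation times their product, and `det [K(j, k)] = det C · (det V) ^ 2`.
-/

open Matrix Finset

theorem Fin.sign_revPerm (n : ℕ) :
    Equiv.Perm.sign (Fin.revPerm : Equiv.Perm (Fin n)) = (-1) ^ (n * (n - 1) / 2) := by
  have hsum : ∑ i : Fin n, #(Ioi i) = n * (n - 1) / 2 := by
    rw [← sum_range_id, ← Fin.sum_univ_eq_sum_range, ← Fintype.sum_equiv Fin.revPerm]
    intro i
    rw [Fin.card_Ioi, Fin.revPerm_apply, Fin.val_rev]
    omega
  rw [Equiv.Perm.sign_eq_prod_prod_Ioi, ← hsum, ← prod_pow_eq_pow_sum]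
  refine Finset.prod_congr rfl fun i _ => ?_
  rw [← Finset.prod_const]
  refine Finset.prod_congr rfl fun j hj => ?_
  simpa using (mem_Ioi.1 hj).le

theorem Matrix.det_of_eq_zero_of_rev_lt {R : Type*} [CommRing R] {n : ℕ}
    (A : Matrix (Fin n) (Fin n) R) (h : ∀ i j : Fin n, i.rev < j → A i j = 0) :
    A.det = (-1) ^ (n * (n - 1) / 2) * ∏ i, A i i.rev := by
  have htri : (A.submatrix id Fin.revPerm).IsUpperTriangular := fun i j hji =>
    h i _ (by simpa using hji)
  have hdet := Matrix.det_permute' Fin.revPerm A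
  rw [Matrix.det_of_isUpperTriangular htri, Fin.sign_revPerm] at hdet
  have hsq : ((-1) ^ (n * (n - 1) / 2) : R) * (-1) ^ (n * (n - 1) / 2) = 1 := by
    rw [← mul_pow, neg_one_mul, neg_neg, one_pow]
  simp only [submatrix_apply, id_eq, Fin.revPerm_apply] at hdet
  push_cast at hdet
  rw [hdet, ← mul_assoc, hsq, one_mul]

theorem add_pow_add_sub_pow_two_mul {R : Type*} [CommRing R] (x y : R) (n : ℕ) :
    (x + y) ^ (2 * n) + (x - y) ^ (2 * n)
      = ∑ b ∈ range (n + 1),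
          2 * ((2 * n).choose (2 * b) : R) * x ^ (2 * (n - b)) * y ^ (2 * b) := by
  have hbinom : (x + y) ^ (2 * n) + (x - y) ^ (2 * n)
      = ∑ r ∈ range (2 * n + 1),
          (1 + (-1) ^ r) * ((2 * n).choose r : R) * x ^ (2 * n - r) * y ^ r := by
    rw [add_comm x, ← neg_add_eq_sub, add_pow, add_pow, ← sum_add_distrib]
    refine sum_congr rfl fun r _ => ?_
    rw [neg_pow]
    ring
  have hsub : (range (n + 1)).image (2 * ·) ⊆ range (2 * n + 1) := by
    intro r
    simp only [mem_image, mem_range]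
    omega
  have hodd : ∀ r ∈ range (2 * n + 1), r ∉ (range (n + 1)).image (2 * ·) →
      (1 + (-1) ^ r) * ((2 * n).choose r : R) * x ^ (2 * n - r) * y ^ r = 0 := by
    intro r hr hnot
    have hr_odd : Odd r := by
      refine Nat.not_even_iff_odd.1 fun ⟨b, hb⟩ => hnot (mem_image.2 ⟨b, ?_, by omega⟩)
      simp only [mem_range] at hr ⊢
      omega
    rw [hr_odd.neg_one_pow, add_neg_cancel, zero_mul, zero_mul, zero_mul]
  rw [hbinom, ← sum_subset hsub hodd, sum_image fun a _ b _ h => by simpa using h]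
  refine sum_congr rfl fun b hb => ?_
  rw [pow_mul, neg_one_sq, one_pow, Nat.mul_sub]
  ring

def Matrix.antidiagonalBand {R : Type*} [Zero R] (n N : ℕ) (c : ℕ → R) :
    Matrix (Fin n) (Fin n) R :=
  of fun a b => if (a : ℕ) + b = N then c b else 0

theorem Matrix.vandermonde_mul_antidiagonalBand_mul_vandermonde_transpose_apply
    {R : Type*} [CommRing R] {n N : ℕ} (hN : N < n) (c : ℕ → R) (u v : Fin n → R)
    (j k : Fin n) :
    (vandermonde u * antidiagonalBand n N c * (vandermonde v)ᵀ) j k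
      = ∑ b ∈ range (N + 1), c b * u j ^ (N - b) * v k ^ b := by
  have hband : (range n ×ˢ range n).filter (fun ba => ba.2 + ba.1 = N) = antidiagonal N := by
    ext ⟨b, a⟩
    simp only [mem_filter, mem_product, mem_range, HasAntidiagonal.mem_antidiagonal]
    omega
  simp only [mul_apply, transpose_apply, vandermonde_apply, antidiagonalBand, of_apply, sum_mul]
  calc _ = ∑ b ∈ range n, ∑ a ∈ range n,
          (u j ^ a * if a + b = N then c b else 0) * v k ^ b := by
        simp only [← Fin.sum_univ_eq_sum_range]
    _ = ∑ ba ∈ antidiagonal N, c ba.1 * u j ^ ba.2 * v k ^ ba.1 := by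
        rw [← hband, sum_filter, sum_product]
        refine sum_congr rfl fun b _ => sum_congr rfl fun a _ => ?_
        split_ifs <;> ring
    _ = _ := by
        rw [Nat.sum_antidiagonal_eq_sum_range_succ (fun b a => c b * u j ^ a * v k ^ b)]

section BinomialKernel

variable {R : Type*} [CommRing R] (m : ℕ) (d₁ d₂ : R)

def binomialKernel (X Y : R) : R :=
  (X + Y) ^ (2 * m) + (X - Y) ^ (2 * m) + d₁ * (X ^ 2 + d₂ * Y ^ 2) ^ (2 * m)

def binomialKernelCoeffs : Matrix (Fin (2 * m + 1)) (Fin (2 * m + 1)) R :=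
  antidiagonalBand _ m (fun b => 2 * ((2 * m).choose (2 * b) : R))
    + d₁ • antidiagonalBand _ (2 * m) (fun b => d₂ ^ b * ((2 * m).choose b : R))

theorem of_binomialKernel_eq_vandermonde_mul_binomialKernelCoeffs (x : Fin (2 * m + 1) → R) :
    of (fun j k => binomialKernel m d₁ d₂ (x j) (x k))
      = vandermonde (fun i => x i ^ 2) * binomialKernelCoeffs m d₁ d₂
        * (vandermonde fun i => x i ^ 2)ᵀ := by
  ext j k
  rw [binomialKernelCoeffs, Matrix.mul_add, Matrix.add_mul, Matrix.mul_smul, Matrix.smul_mul,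
    Matrix.add_apply, Matrix.smul_apply,
    vandermonde_mul_antidiagonalBand_mul_vandermonde_transpose_apply (by omega),
    vandermonde_mul_antidiagonalBand_mul_vandermonde_transpose_apply (by omega), of_apply,
    binomialKernel, add_pow_add_sub_pow_two_mul, add_comm (x j ^ 2), add_pow, smul_eq_mul,
    mul_sum, mul_sum]
  congr 1 <;> exact sum_congr rfl fun b _ => by ring

theorem det_binomialKernelCoeffs (hm : 1 ≤ m) :
    (binomialKernelCoeffs m d₁ d₂).det
      = (-1) ^ (m * (2 * m + 1)) * d₁ ^ (2 * m + 1) * d₂ ^ (m * (2 * m + 1))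
        * ∏ r ∈ range (2 * m + 1), ((2 * m).choose r : R) := by
  have hzero :
      ∀ i j : Fin (2 * m + 1), i.rev < j → binomialKernelCoeffs m d₁ d₂ i j = 0 := by
    intro i j hij
    rw [Fin.lt_def, Fin.val_rev] at hij
    simp only [binomialKernelCoeffs, antidiagonalBand, Matrix.add_apply, Matrix.smul_apply,
      of_apply]
    rw [if_neg (by omega), if_neg (by omega), smul_zero, add_zero]
  have hantidiag : ∀ i : Fin (2 * m + 1), binomialKernelCoeffs m d₁ d₂ i i.rev
      = d₁ * (d₂ ^ (i.rev : ℕ) * ((2 * m).choose i.rev : R)) := by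
    intro i
    have hi := Fin.val_rev i
    simp only [binomialKernelCoeffs, antidiagonalBand, Matrix.add_apply, Matrix.smul_apply,
      of_apply]
    rw [if_neg (by omega), if_pos (by omega), zero_add, smul_eq_mul]
  have hexp : (2 * m + 1) * (2 * m + 1 - 1) / 2 = m * (2 * m + 1) := by
    rw [Nat.add_sub_cancel, show (2 * m + 1) * (2 * m) = m * (2 * m + 1) * 2 by ring,
      Nat.mul_div_cancel _ two_pos]
  have hsum : ∑ i ∈ range (2 * m + 1), i = m * (2 * m + 1) := by
    rw [sum_range_id, hexp]
  rw [det_of_eq_zero_of_rev_lt _ hzero, hexp, Fintype.prod_congr _ _ hantidiag,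
    Fintype.prod_equiv Fin.revPerm
      (fun i => d₁ * (d₂ ^ (i.rev : ℕ) * ((2 * m).choose i.rev : R)))
      (fun i => d₁ * (d₂ ^ (i : ℕ) * ((2 * m).choose i : R))) (fun _ => rfl),
    Fin.prod_univ_eq_prod_range (fun i => d₁ * (d₂ ^ i * ((2 * m).choose i : R))),
    prod_mul_distrib, prod_mul_distrib, prod_const, card_range, prod_pow_eq_pow_sum, hsum]
  ring

theorem det_of_binomialKernel (hm : 1 ≤ m) (x : Fin (2 * m + 1) → R) :
    (of fun j k => binomialKernel m d₁ d₂ (x j) (x k)).det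
      = (-1) ^ (m * (2 * m + 1)) * d₁ ^ (2 * m + 1) * d₂ ^ (m * (2 * m + 1))
        * (∏ r ∈ range (2 * m + 1), ((2 * m).choose r : R))
        * (vandermonde fun i => x i ^ 2).det ^ 2 := by
  rw [of_binomialKernel_eq_vandermonde_mul_binomialKernelCoeffs, det_mul, det_mul, det_transpose,
    det_binomialKernelCoeffs m d₁ d₂ hm]
  ring

end BinomialKernel

theorem Fin.prod_prod_Ioi_eq_prod_range_prod_range {M : Type*} [CommMonoid M] (n : ℕ)
    (f : ℕ → ℕ → M) :
    ∏ i : Fin n, ∏ j ∈ Ioi i, f i j = ∏ j ∈ range n, ∏ i ∈ range j, f i j := by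
  rw [prod_comm' (t' := univ) (s' := fun j => Iio j) (by simp), ← Fin.prod_univ_eq_prod_range]
  refine prod_congr rfl fun j _ => ?_
  rw [← Nat.Iio_eq_range, ← Fin.map_valEmbedding_Iio, prod_map]
  rfl

theorem stmt_13_general (m : ℕ) (hm : 1 ≤ m) (p : ℕ) (hpm : p = 4 * m + 1) [Fact p.Prime]
    (δ₁ δ₂ : ℤ) :
    (Matrix.of fun j k : Fin (2 * m + 1) =>
        legendreSym p (((j : ℕ) : ℤ) + ((k : ℕ) : ℤ))
          + legendreSym p (((j : ℕ) : ℤ) - ((k : ℕ) : ℤ))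
          + δ₁ * legendreSym p (((j : ℕ) : ℤ) ^ 2 + δ₂ * ((k : ℕ) : ℤ) ^ 2)).det
      ≡ (-1 : ℤ) ^ (m * (2 * m + 1)) * δ₁ ^ (2 * m + 1) * δ₂ ^ (m * (2 * m + 1))
          * (∏ r ∈ Finset.range (2 * m + 1), (Nat.choose (2 * m) r : ℤ))
          * ∏ j ∈ Finset.range (2 * m + 1), ∏ i ∈ Finset.range j,
              ((j : ℤ) ^ 2 - (i : ℤ) ^ 2) ^ 2 [ZMOD (p : ℤ)] := by
  have hp : p / 2 = 2 * m := by omega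
  set x : Fin (2 * m + 1) → ZMod p := fun i => ((i : ℕ) : ZMod p)
  rw [← ZMod.intCast_eq_intCast_iff, Int.cast_det]
  calc _ = (of fun j k => binomialKernel m (δ₁ : ZMod p) δ₂ (x j) (x k)).det := by
        congr 1
        ext j k
        simp [binomialKernel, x, legendreSym.eq_pow, hp]
    _ = _ := by
        simp_rw [det_of_binomialKernel m _ _ hm, det_vandermonde, ← prod_pow]
        rw [Fin.prod_prod_Ioi_eq_prod_range_prod_range (2 * m + 1)
          fun i j => ((j : ZMod p) ^ 2 - (i : ZMod p) ^ 2) ^ 2]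
        push_cast
        rfl

/-- Exact congruence refinement of Sun's Conjecture 4.10(i), standard half-system. -/
theorem stmt_13 (m : ℕ) (hm : 1 ≤ m) (p : ℕ) (hpm : p = 4 * m + 1) [Fact p.Prime]
    (δ₁ δ₂ : ℤ) (hδ₁ : δ₁ = 1 ∨ δ₁ = -1) (hδ₂ : δ₂ = 1 ∨ δ₂ = -1) :
    (Matrix.of fun j k : Fin (2 * m + 1) =>
        legendreSym p (((j : ℕ) : ℤ) + ((k : ℕ) : ℤ))
          + legendreSym p (((j : ℕ) : ℤ) - ((k : ℕ) : ℤ))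
          + δ₁ * legendreSym p (((j : ℕ) : ℤ) ^ 2 + δ₂ * ((k : ℕ) : ℤ) ^ 2)).det
      ≡ (-1 : ℤ) ^ (m * (2 * m + 1)) * δ₁ ^ (2 * m + 1) * δ₂ ^ (m * (2 * m + 1))
          * (∏ r ∈ Finset.range (2 * m + 1), (Nat.choose (2 * m) r : ℤ))
          * ∏ j ∈ Finset.range (2 * m + 1), ∏ i ∈ Finset.range j,
              ((j : ℤ) ^ 2 - (i : ℤ) ^ 2) ^ 2 [ZMOD (p : ℤ)] :=
  stmt_13_general m hm p hpm δ₁ δ₂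
end

section
/- Let p ≡ 1 (mod 4) be prime and let δ₁, δ₂ ∈ {1, −1}. Then the integer determinant D = det[(j+k / p) + (j−k / p) + δ₁·(j²+δ₂k² / p)]_{0≤j,k≤(p−1)/2} satisfies (2D / p) = 1; equivalently, 2D is a nonzero quadratic residue modulo p. -/
open Matrix BigOperators Finset



lemma sum_part1 {R : Type*} [CommRing R] (m : ℕ) (hm : m % 2 = 0) (x y : R) :
    (x + y) ^ m + (x - y) ^ m
      = ∑ b ∈ range (m + 1), 2 * (m.choose (2 * b)) * x ^ (m - 2 * b) * y ^ (2 * b) := by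
  have h1 : (x + y) ^ m = ∑ i ∈ range (m + 1), x ^ i * y ^ (m - i) * (m.choose i : R) :=
    add_pow x y m
  have h2 : (x - y) ^ m = ∑ i ∈ range (m + 1),
      (-1 : R) ^ (m - i) * (x ^ i * y ^ (m - i) * (m.choose i : R)) := by
    rw [sub_eq_add_neg, add_pow]
    refine Finset.sum_congr rfl fun i _ => ?_
    rw [neg_pow]
    ring
  rw [h1, h2, ← Finset.sum_add_distrib]
  have key : ∀ i ∈ range (m + 1),
      x ^ i * y ^ (m - i) * (m.choose i : R)
        + (-1 : R) ^ (m - i) * (x ^ i * y ^ (m - i) * (m.choose i : R))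
      = (if (m - i) % 2 = 0 then (2:R) * x ^ i * y ^ (m-i) * (m.choose i : R) else 0) := by
    intro i _
    by_cases h : (m - i) % 2 = 0
    · rw [if_pos h, (Nat.even_iff.2 h).neg_one_pow]; ring
    · rw [if_neg h, (Nat.odd_iff.2 (by omega)).neg_one_pow]; ring
  rw [Finset.sum_congr rfl key, Finset.sum_ite, Finset.sum_const_zero, add_zero]
  -- now reindex the filtered sum
  rw [show (range (m+1)).filter (fun i => (m - i) % 2 = 0)
      = (range (m/2 + 1)).image (fun b => m - 2 * b) by
    ext i
    simp only [mem_filter, mem_range, mem_image]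
    constructor
    · rintro ⟨hi, hpar⟩; exact ⟨(m - i)/2, by omega, by omega⟩
    · rintro ⟨b, hb, rfl⟩; omega]
  rw [Finset.sum_image (by intro a ha b hb h; simp only [coe_range, Set.mem_Iio, mem_range] at ha hb h; omega)]
  rw [show (range (m+1)) = range (m/2 + 1) ∪ Ico (m/2+1) (m+1) by
    rw [range_eq_Ico, range_eq_Ico]; exact (Finset.Ico_union_Ico_eq_Ico (a := 0) (b := m/2+1) (c := m+1) (by omega) (by omega)).symm]
  rw [Finset.sum_union (by
    simp only [Finset.disjoint_left, mem_range, mem_Ico]; omega)]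
  have hz : ∑ b ∈ Ico (m/2+1) (m+1), 2 * (m.choose (2*b) : R) * x ^ (m - 2*b) * y ^ (2*b) = 0 := by
    refine Finset.sum_eq_zero fun b hb => ?_
    simp only [mem_Ico] at hb
    rw [Nat.choose_eq_zero_of_lt (by omega)]
    push_cast; ring
  rw [hz, add_zero]
  refine Finset.sum_congr rfl fun b hb => ?_
  simp only [mem_range] at hb
  rw [show m - (m - 2*b) = 2*b by omega,
    show m.choose (m - 2*b) = m.choose (2*b) by
      rw [show m - 2*b = m - (2*b) from rfl, Nat.choose_symm (by omega)]]
  ring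


lemma sum_part2 {R : Type*} [CommRing R] (m : ℕ) (c x y : R) :
    (x ^ 2 + c * y ^ 2) ^ m
      = ∑ b ∈ range (m + 1), c ^ b * (m.choose b : R) * x ^ (2 * (m - b)) * y ^ (2 * b) := by
  rw [add_comm, add_pow]
  refine Finset.sum_congr rfl fun b hb => ?_
  rw [mul_pow, ← pow_mul, ← pow_mul]
  ring

lemma sum_fin_ite {R : Type*} [CommRing R] {n : ℕ} (g : ℕ → R) (t b : ℕ) (c : R)
    (hb : b ≤ t) (ht : t - b < n) :
    (∑ a : Fin n, g (a : ℕ) * (if (a : ℕ) + b = t then c else 0)) = g (t - b) * c := by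
  rw [Finset.sum_eq_single (⟨t - b, ht⟩ : Fin n)]
  · simp only [if_pos (by omega : t - b + b = t)]
  · intro a _ ha
    rw [if_neg, mul_zero]
    intro h; exact ha (Fin.ext (by simp only []; omega))
  · simp

lemma sum_fin_ite_zero {R : Type*} [CommRing R] {n : ℕ} (g : ℕ → R) (t b : ℕ) (c : R)
    (h : ∀ a : Fin n, (a : ℕ) + b ≠ t) :
    (∑ a : Fin n, g (a : ℕ) * (if (a : ℕ) + b = t then c else 0)) = 0 :=
  Finset.sum_eq_zero fun a _ => by rw [if_neg (h a), mul_zero]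

lemma pm_one_pow {R : Type*} [Monoid R] [HasDistribNeg R] {d : R}
    (h : d = 1 ∨ d = -1) (k : ℕ) : d ^ k = 1 ∨ d ^ k = -1 := by
  rcases h with h | h
  · left; rw [h, one_pow]
  · rw [h]
    rcases Nat.even_or_odd k with hk | hk
    · left; exact hk.neg_one_pow
    · right; exact hk.neg_one_pow

lemma pm_one_mul {R : Type*} [Monoid R] [HasDistribNeg R] {d e : R}
    (h : d = 1 ∨ d = -1) (h' : e = 1 ∨ e = -1) : d * e = 1 ∨ d * e = -1 := by
  rcases h with h | h <;> rcases h' with h2 | h2 <;> subst h <;> subst h2 <;> simp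

lemma nat_prod_choose (m : ℕ) :
    (∏ b ∈ range (m + 1), m.choose (m - b)) * (∏ b ∈ range (m + 1), Nat.factorial b) ^ 2
      = (Nat.factorial m) ^ (m + 1) := by
  have h1 : (∏ b ∈ range (m + 1), m.choose (m - b)) = ∏ b ∈ range (m + 1), m.choose b := by
    have := Finset.prod_range_reflect (fun b => m.choose b) (m + 1)
    simpa using this
  have h2 : (∏ b ∈ range (m + 1), Nat.factorial b) = ∏ b ∈ range (m + 1), Nat.factorial (m - b) := by
    have := Finset.prod_range_reflect (fun b => Nat.factorial (m - b)) (m + 1)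
    simp only [Nat.add_sub_cancel] at this
    rw [← this]
    refine Finset.prod_congr rfl fun b hb => ?_
    simp only [mem_range] at hb
    congr 1
    omega
  rw [h1, sq]
  nth_rewrite 2 [h2]
  rw [show (∏ b ∈ range (m+1), m.choose b) * ((∏ b ∈ range (m+1), Nat.factorial b) * ∏ b ∈ range (m+1), Nat.factorial (m-b))
      = ∏ b ∈ range (m+1), (m.choose b * Nat.factorial b * Nat.factorial (m - b)) by
    rw [Finset.prod_mul_distrib, Finset.prod_mul_distrib]; ring]
  rw [Finset.prod_congr rfl fun b hb => Nat.choose_mul_factorial_mul_factorial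
    (by simp only [mem_range] at hb; omega)]
  simp


lemma fac_sq_eq_neg_one (p : ℕ) [Fact p.Prime] (hp4 : p % 4 = 1) :
    ((Nat.factorial (p / 2) : ZMod p)) ^ 2 = -1 := by
  have hp : p.Prime := Fact.out
  have hp5 : 5 ≤ p := by
    have := hp.two_le
    rcases Nat.lt_or_ge p 5 with h | h
    · interval_cases p <;> simp_all <;> omega
    · exact h
  set m := p / 2 with hm
  have hpm : p = 2 * m + 1 := by omega
  have hme : m % 2 = 0 := by omega
  have key : (∏ x ∈ Ico 1 p, (x : ZMod p)) = -1 := ZMod.prod_Ico_one_prime p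
  have hsplit : Ico 1 p = Ico 1 (m + 1) ∪ Ico (m + 1) p := by
    rw [Finset.Ico_union_Ico_eq_Ico (by omega) (by omega)]
  have hdisj : Disjoint (Ico 1 (m + 1)) (Ico (m + 1) p) := by
    simp only [Finset.disjoint_left, mem_Ico]
    omega
  rw [hsplit, Finset.prod_union hdisj] at key
  have h1 : (∏ x ∈ Ico 1 (m + 1), (x : ZMod p)) = (Nat.factorial m : ZMod p) := by
    rw [← Nat.cast_prod, Finset.prod_Ico_id_eq_factorial]
  have h2 : (∏ x ∈ Ico (m + 1) p, (x : ZMod p)) = (Nat.factorial m : ZMod p) := by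
    rw [show (∏ x ∈ Ico (m + 1) p, (x : ZMod p)) = ∏ x ∈ Ico 1 (m + 1), ((p - x : ℕ) : ZMod p) by
      refine Finset.prod_nbij' (fun x => p - x) (fun x => p - x) ?_ ?_ ?_ ?_ ?_
      · intro a ha; simp only [mem_Ico] at *; omega
      · intro a ha; simp only [mem_Ico] at *; omega
      · intro a ha; simp only [mem_Ico] at ha; show p - (p - a) = a; omega
      · intro a ha; simp only [mem_Ico] at ha; show p - (p - a) = a; omega
      · intro a ha; simp only [mem_Ico] at ha
        show ((a:ZMod p)) = ((p - (p - a) : ℕ) : ZMod p)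
        congr 1
        omega]
    have : ∀ x ∈ Ico 1 (m + 1), ((p - x : ℕ) : ZMod p) = -(x : ZMod p) := by
      intro x hx
      simp only [mem_Ico] at hx
      rw [Nat.cast_sub (by omega), ZMod.natCast_self, zero_sub]
    rw [Finset.prod_congr rfl this]
    have : ∀ x ∈ Ico 1 (m+1), -((x:ℕ) : ZMod p) = (-1) * (x : ZMod p) := fun x _ => by ring
    rw [Finset.prod_congr rfl this, Finset.prod_mul_distrib, Finset.prod_const, Nat.card_Ico,
      show m + 1 - 1 = m from rfl, (Nat.even_iff.2 hme).neg_one_pow, one_mul, h1]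
  rw [h1, h2] at key
  rw [sq]
  exact key

lemma two_pow_half (p : ℕ) [Fact p.Prime] (hp4 : p % 4 = 1) :
    ((2 : ZMod p)) ^ (p / 2) = (-1 : ZMod p) ^ (p / 4) := by
  have hp : p.Prime := Fact.out
  have hp5 : 5 ≤ p := by
    have := hp.two_le
    rcases Nat.lt_or_ge p 5 with h | h
    · interval_cases p <;> simp_all
    · exact h
  have h2 : ((legendreSym p 2 : ℤ) : ZMod p) = ((2 : ℤ) : ZMod p) ^ (p / 2) :=
    legendreSym.eq_pow p 2
  rw [legendreSym.at_two (by omega)] at h2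
  have hchi : ZMod.χ₈ (p : ZMod 8) = if p % 2 = 0 then 0 else
      if p % 8 = 1 ∨ p % 8 = 7 then 1 else -1 := ZMod.χ₈_nat_eq_if_mod_eight p
  have h8 : p % 8 = 1 ∨ p % 8 = 5 := by omega
  rcases h8 with h8 | h8
  · rw [hchi] at h2
    rw [if_neg (by omega), if_pos (by omega)] at h2
    rw [(Nat.even_iff.2 (by omega : (p / 4) % 2 = 0)).neg_one_pow]
    push_cast at h2
    rw [← h2]
  · rw [hchi] at h2
    rw [if_neg (by omega), if_neg (by omega)] at h2
    rw [(Nat.odd_iff.2 (by omega : (p / 4) % 2 = 1)).neg_one_pow]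
    push_cast at h2
    rw [← h2]

lemma isSquare_two_fac (p : ℕ) [Fact p.Prime] (hp4 : p % 4 = 1) :
    IsSquare ((2 : ZMod p) * (Nat.factorial (p / 2) : ZMod p)) := by
  have hp : p.Prime := Fact.out
  have hp5 : 5 ≤ p := by
    have := hp.two_le
    rcases Nat.lt_or_ge p 5 with h | h
    · interval_cases p <;> simp_all
    · exact h
  have hfac := fac_sq_eq_neg_one p hp4
  have hfne : ((Nat.factorial (p / 2) : ZMod p)) ≠ 0 := by
    intro h
    rw [h] at hfac
    simp at hfac
  have h2ne : ((2 : ZMod p)) ≠ 0 := by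
    have : ((2 : ℕ) : ZMod p) ≠ 0 := by
      rw [Ne, ZMod.natCast_eq_zero_iff]
      intro h
      exact absurd (Nat.le_of_dvd (by norm_num) h) (by omega)
    simpa using this
  rw [ZMod.euler_criterion p (mul_ne_zero h2ne hfne)]
  rw [mul_pow, two_pow_half p hp4]
  rw [show ((Nat.factorial (p/2) : ZMod p)) ^ (p / 2)
      = (((Nat.factorial (p/2) : ZMod p)) ^ 2) ^ (p / 4) by
    rw [← pow_mul]; congr 1; omega]
  rw [hfac, ← mul_pow]
  norm_num

/-- Sun's Conjecture 4.10(i): `2D` is a nonzero quadratic residue mod `p`. -/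
theorem stmt_14 (p : ℕ) [Fact p.Prime] (hp4 : p % 4 = 1)
    (δ₁ δ₂ : ℤ) (hδ₁ : δ₁ = 1 ∨ δ₁ = -1) (hδ₂ : δ₂ = 1 ∨ δ₂ = -1)
    (D : ℤ)
    (hD : D = (Matrix.of fun j k : Fin ((p - 1) / 2 + 1) =>
        legendreSym p (((j : ℕ) : ℤ) + ((k : ℕ) : ℤ))
          + legendreSym p (((j : ℕ) : ℤ) - ((k : ℕ) : ℤ))
          + δ₁ * legendreSym p (((j : ℕ) : ℤ) ^ 2 + δ₂ * ((k : ℕ) : ℤ) ^ 2)).det) :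
    legendreSym p (2 * D) = 1 := by
  have hp : p.Prime := Fact.out
  have hp5 : 5 ≤ p := by
    have := hp.two_le
    rcases Nat.lt_or_ge p 5 with h | h
    · interval_cases p <;> simp_all
    · exact h
  set R := ZMod p with hR
  set m := p / 2 with hm
  have hpm : p = 2 * m + 1 := by omega
  have hme : m % 2 = 0 := by omega
  have hm2 : 2 ≤ m := by omega
  have hN : (p - 1) / 2 + 1 = m + 1 := by omega
  set N := (p - 1) / 2 + 1 with hNdef
  -- index type
  have hb_le : ∀ b : Fin N, (b : ℕ) ≤ m := fun b => by have := b.isLt; omega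
  set d₁ : R := ((δ₁ : ℤ) : R) with hd₁
  set d₂ : R := ((δ₂ : ℤ) : R) with hd₂
  have hd₁pm : d₁ = 1 ∨ d₁ = -1 := by
    rcases hδ₁ with h | h <;> [left; right] <;> rw [hd₁, h] <;> push_cast <;> ring
  have hd₂pm : d₂ = 1 ∨ d₂ = -1 := by
    rcases hδ₂ with h | h <;> [left; right] <;> rw [hd₂, h] <;> push_cast <;> ring
  -- the matrices
  set V : Matrix (Fin N) (Fin N) R :=
    Matrix.vandermonde (fun k : Fin N => ((k : ℕ) : R) ^ 2) with hV
  set G : Matrix (Fin N) (Fin N) R := Matrix.of (fun a b : Fin N =>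
    (if (a : ℕ) + (b : ℕ) = m / 2 then (2 * (m.choose (2 * (b : ℕ))) : R) else 0)
      + (if (a : ℕ) + (b : ℕ) = m then d₁ * d₂ ^ (b : ℕ) * (m.choose (b : ℕ) : R) else 0))
    with hG
  set M : Matrix (Fin N) (Fin N) ℤ := Matrix.of (fun j k : Fin N =>
    legendreSym p (((j : ℕ) : ℤ) + ((k : ℕ) : ℤ))
      + legendreSym p (((j : ℕ) : ℤ) - ((k : ℕ) : ℤ))
      + δ₁ * legendreSym p (((j : ℕ) : ℤ) ^ 2 + δ₂ * ((k : ℕ) : ℤ) ^ 2)) with hM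
  -- Step A : entrywise identity
  have stepA : M.map (Int.cast : ℤ → R) = V * G * Vᵀ := by
    ext j k
    have hx : ∀ i : Fin N, True := fun _ => trivial
    show ((legendreSym p (((j : ℕ) : ℤ) + ((k : ℕ) : ℤ))
      + legendreSym p (((j : ℕ) : ℤ) - ((k : ℕ) : ℤ))
      + δ₁ * legendreSym p (((j : ℕ) : ℤ) ^ 2 + δ₂ * ((k : ℕ) : ℤ) ^ 2) : ℤ) : R)
      = (V * G * Vᵀ) j k
    rw [Int.cast_add, Int.cast_add, Int.cast_mul, legendreSym.eq_pow, legendreSym.eq_pow, legendreSym.eq_pow]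
    push_cast
    set x : R := ((j : ℕ) : R) with hxj
    set y : R := ((k : ℕ) : R) with hyk
    -- compute RHS
    have hrhs : (V * G * Vᵀ) j k
        = ∑ b : Fin N, ((if (b : ℕ) ≤ m / 2 then
              (x ^ 2) ^ (m / 2 - (b : ℕ)) * (2 * (m.choose (2 * (b : ℕ))) : R) else 0)
            + (x ^ 2) ^ (m - (b : ℕ)) * (d₁ * d₂ ^ (b : ℕ) * (m.choose (b : ℕ) : R)))
            * (y ^ 2) ^ (b : ℕ) := by
      rw [Matrix.mul_apply]
      refine Finset.sum_congr rfl fun b _ => ?_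
      rw [Matrix.mul_apply]
      congr 1
      · have hsum : ∀ a : Fin N, V j a * G a b
            = (x ^ 2) ^ (a : ℕ) * (if (a : ℕ) + (b : ℕ) = m / 2
                then (2 * (m.choose (2 * (b : ℕ))) : R) else 0)
              + (x ^ 2) ^ (a : ℕ) * (if (a : ℕ) + (b : ℕ) = m
                then d₁ * d₂ ^ (b : ℕ) * (m.choose (b : ℕ) : R) else 0) := by
          intro a
          simp only [hV, hG, Matrix.vandermonde_apply, Matrix.of_apply, mul_add, ← hxj]
        rw [Finset.sum_congr rfl (fun a _ => hsum a), Finset.sum_add_distrib]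
        congr 1
        · by_cases hbm : (b : ℕ) ≤ m / 2
          · rw [if_pos hbm]
            exact sum_fin_ite (fun i => (x ^ 2) ^ i) (m / 2) (b : ℕ) _ hbm (by omega)
          · rw [if_neg hbm]
            exact sum_fin_ite_zero (fun i => (x ^ 2) ^ i) (m / 2) (b : ℕ) _
              (fun a => by omega)
        · exact sum_fin_ite (fun i => (x ^ 2) ^ i) m (b : ℕ) _ (hb_le b) (by omega)
    rw [hrhs]
    -- convert to range sums
    rw [Fin.sum_univ_eq_sum_range (fun i : ℕ =>
      ((if i ≤ m / 2 then (x ^ 2) ^ (m / 2 - i) * (2 * (m.choose (2 * i)) : R) else 0)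
        + (x ^ 2) ^ (m - i) * (d₁ * d₂ ^ i * (m.choose i : R))) * (y ^ 2) ^ i) N]
    rw [show range N = range (m + 1) by rw [hN]]
    rw [sum_part1 m hme x y, sum_part2 m d₂ x y, Finset.mul_sum, ← Finset.sum_add_distrib]
    refine Finset.sum_congr rfl fun b hb => ?_
    simp only [mem_range] at hb
    rw [← pow_mul x, ← pow_mul x, ← pow_mul y]
    simp only [← hd₁, ← hd₂]
    by_cases hbm : b ≤ m / 2
    · rw [if_pos hbm, show 2 * (m / 2 - b) = m - 2 * b by omega]
      ring
    · rw [if_neg hbm, Nat.choose_eq_zero_of_lt (by omega : m < 2 * b)]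
      push_cast
      ring
  
  -- Step B : cast D into ZMod p
  have hDc : ((D : ℤ) : R) = V.det ^ 2 * G.det := by
    rw [hD]
    have hmap : ((M.det : ℤ) : R) = (M.map (Int.cast : ℤ → R)).det :=
      RingHom.map_det (Int.castRingHom R) M
    rw [hmap, stepA, Matrix.det_mul, Matrix.det_mul, Matrix.det_transpose]
    ring
  -- Step C : determinant of G
  set H : Matrix (Fin N) (Fin N) R := G.submatrix id Fin.rev with hH
  have hval_rev : ∀ b : Fin N, ((Fin.rev b : Fin N) : ℕ) = m - (b : ℕ) := by
    intro b
    have := b.isLt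
    rw [Fin.val_rev]
    omega
  have hHtri : H.BlockTriangular id := by
    intro a b hab
    have hab' : (b : ℕ) < (a : ℕ) := hab
    show G a (Fin.rev b) = 0
    rw [hG]
    simp only [Matrix.of_apply]
    rw [hval_rev b, if_neg (by have := hb_le a; have := hb_le b; omega),
      if_neg (by have := hb_le a; have := hb_le b; omega), add_zero]
  have hHdiag : ∀ b : Fin N, H b b = d₁ * d₂ ^ (m - (b : ℕ)) * (m.choose (m - (b : ℕ)) : R) := by
    intro b
    show G b (Fin.rev b) = _
    rw [hG]
    simp only [Matrix.of_apply]
    rw [hval_rev b, if_neg (by have := hb_le b; omega), if_pos (by have := hb_le b; omega),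
      zero_add]
  have hHdet : H.det = ∏ b : Fin N, (d₁ * d₂ ^ (m - (b : ℕ)) * (m.choose (m - (b : ℕ)) : R)) := by
    rw [Matrix.det_of_upperTriangular hHtri]
    exact Finset.prod_congr rfl fun b _ => hHdiag b
  -- relate det H and det G
  have hperm : H.det = (Equiv.Perm.sign (Fin.revPerm : Equiv.Perm (Fin N)) : ℤ) * G.det := by
    have := Matrix.det_permute' (Fin.revPerm : Equiv.Perm (Fin N)) G
    rw [hH]
    convert this using 2
    rfl
  -- the unit
  set P : R := ∏ b : Fin N, (m.choose (m - (b : ℕ)) : R) with hP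
  have hprodsplit : (∏ b : Fin N, (d₁ * d₂ ^ (m - (b : ℕ)) * (m.choose (m - (b : ℕ)) : R)))
      = (d₁ ^ N * d₂ ^ (∑ b : Fin N, (m - (b : ℕ)))) * P := by
    rw [Finset.prod_mul_distrib, Finset.prod_mul_distrib, Finset.prod_const,
      Finset.prod_pow_eq_pow_sum, Finset.card_univ, Fintype.card_fin]
  have hu : ∃ u : R, (u = 1 ∨ u = -1) ∧ G.det = u * P := by
    have hupm : (d₁ ^ N * d₂ ^ (∑ b : Fin N, (m - (b : ℕ))) = 1
        ∨ d₁ ^ N * d₂ ^ (∑ b : Fin N, (m - (b : ℕ))) = -1) :=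
      pm_one_mul (pm_one_pow hd₁pm N) (pm_one_pow hd₂pm _)
    rcases Int.units_eq_one_or (Equiv.Perm.sign (Fin.revPerm : Equiv.Perm (Fin N))) with hs | hs <;>
      rw [hs] at hperm
    · refine ⟨d₁ ^ N * d₂ ^ (∑ b : Fin N, (m - (b : ℕ))), hupm, ?_⟩
      simp only [Units.val_one, Int.cast_one, one_mul] at hperm
      rw [← hperm, hHdet, hprodsplit]
    · refine ⟨-(d₁ ^ N * d₂ ^ (∑ b : Fin N, (m - (b : ℕ)))), ?_, ?_⟩
      · rcases hupm with h | h <;> rw [h] <;> norm_num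
      · simp only [Units.val_neg, Units.val_one, Int.cast_neg, Int.cast_one, neg_mul,
          one_mul] at hperm
        have : G.det = -H.det := by rw [hperm]; ring
        rw [this, hHdet, hprodsplit]
        ring
  obtain ⟨u, hupm, hGdet⟩ := hu
  -- Step D : the product of binomial coefficients
  set F : R := ∏ b : Fin N, (Nat.factorial (b : ℕ) : R) with hF
  have hrangeN : range (m + 1) = range N := by rw [hN]
  have hPr : P = ((∏ b ∈ range (m + 1), m.choose (m - b) : ℕ) : R) := by
    rw [Nat.cast_prod, hrangeN, hP, ← Fin.prod_univ_eq_prod_range (fun i => (m.choose (m - i) : R)) N]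
  have hFr : F = ((∏ b ∈ range (m + 1), Nat.factorial b : ℕ) : R) := by
    rw [Nat.cast_prod, hrangeN, hF, ← Fin.prod_univ_eq_prod_range (fun i => (Nat.factorial i : R)) N]
  have hPF : P * F ^ 2 = ((Nat.factorial m : R)) ^ (m + 1) := by
    rw [hPr, hFr, ← Nat.cast_pow, ← Nat.cast_pow, ← Nat.cast_mul]
    exact_mod_cast congrArg (Nat.cast : ℕ → R) (nat_prod_choose m)
  have hFne : F ≠ 0 := by
    rw [hF]
    refine Finset.prod_ne_zero_iff.2 fun b _ => ?_
    intro h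
    rw [ZMod.natCast_eq_zero_iff] at h
    rw [Nat.Prime.dvd_factorial hp] at h
    have := hb_le b
    omega
  have hfac : ((Nat.factorial m : R)) ^ 2 = -1 := fac_sq_eq_neg_one p hp4
  have hfacne : ((Nat.factorial m : R)) ≠ 0 := by
    intro h
    rw [h] at hfac
    simp at hfac
  have hPval : P = ((Nat.factorial m : R)) ^ (m + 1) * (F⁻¹) ^ 2 := by
    rw [← hPF]
    rw [mul_assoc, ← mul_pow, mul_inv_cancel₀ hFne, one_pow, mul_one]
  -- Step E : Vandermonde determinant nonzero
  have hVne : V.det ≠ 0 := by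
    rw [hV, Matrix.det_vandermonde]
    refine Finset.prod_ne_zero_iff.2 fun i _ => Finset.prod_ne_zero_iff.2 fun j hj => ?_
    rw [Finset.mem_Ioi] at hj
    have hij : (i : ℕ) < (j : ℕ) := hj
    rw [sub_ne_zero]
    intro heq
    have hcast : (((((j : ℕ) : ℤ)) ^ 2 - (((i : ℕ) : ℤ)) ^ 2 : ℤ) : R) = 0 := by
      push_cast
      rw [heq]
      ring
    rw [ZMod.intCast_zmod_eq_zero_iff_dvd] at hcast
    have hfact : ((((j : ℕ) : ℤ)) ^ 2 - (((i : ℕ) : ℤ)) ^ 2 : ℤ)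
        = (((j : ℕ) : ℤ) - ((i : ℕ) : ℤ)) * (((j : ℕ) : ℤ) + ((i : ℕ) : ℤ)) := by ring
    rw [hfact] at hcast
    have hpZ : Prime ((p : ℕ) : ℤ) := Nat.prime_iff_prime_int.mp hp
    rcases hpZ.dvd_mul.mp hcast with hd | hd
    · have h1 : ((p : ℕ) : ℤ) ≤ ((j : ℕ) : ℤ) - ((i : ℕ) : ℤ) :=
        Int.le_of_dvd (by omega) hd
      have := hb_le j
      omega
    · have h1 : ((p : ℕ) : ℤ) ≤ ((j : ℕ) : ℤ) + ((i : ℕ) : ℤ) :=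
        Int.le_of_dvd (by omega) hd
      have := hb_le j
      have := hb_le i
      omega
  -- final assembly
  have h2ne : ((2 : R)) ≠ 0 := by
    have h22 : ((2 : ℕ) : R) ≠ 0 := by
      rw [Ne, ZMod.natCast_eq_zero_iff]
      intro h
      exact absurd (Nat.le_of_dvd (by norm_num) h) (by omega)
    simpa using h22
  have key : (((2 * D : ℤ)) : R)
      = (2 * (Nat.factorial m : R))
        * ((V.det * ((Nat.factorial m : R)) ^ (m / 2)) * F⁻¹) ^ 2 * u := by
    rw [Int.cast_mul, Int.cast_ofNat]
    rw [hDc, hGdet, hPval]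
    rw [show ((Nat.factorial m : R)) ^ (m + 1)
        = (Nat.factorial m : R) * (((Nat.factorial m : R)) ^ (m / 2)) ^ 2 by
      rw [← pow_mul, ← pow_succ']
      congr 1
      omega]
    ring
  have hune : u ≠ 0 := by
    rcases hupm with h | h <;> rw [h] <;> intro hc <;> simp at hc
  have husq : IsSquare u := by
    rcases hupm with h | h
    · rw [h]; exact IsSquare.one
    · rw [h]
      exact (ZMod.exists_sq_eq_neg_one_iff (p := p)).2 (by omega)
  have hsq : IsSquare ((((2 * D : ℤ)) : R)) := by
    rw [key]
    refine ((isSquare_two_fac p hp4).mul ?_).mul husq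
    exact ⟨(V.det * ((Nat.factorial m : R)) ^ (m / 2)) * F⁻¹, by ring⟩
  have hne : ((((2 * D : ℤ)) : R)) ≠ 0 := by
    rw [key]
    refine mul_ne_zero (mul_ne_zero (mul_ne_zero h2ne hfacne) (pow_ne_zero _ ?_)) hune
    exact mul_ne_zero (mul_ne_zero hVne (pow_ne_zero _ hfacne)) (inv_ne_zero hFne)
  exact (legendreSym.eq_one_iff p hne).2 hsq
end

section
/- Let p = 4m+1 be prime. Then the Legendre symbol of the product of central binomial coefficients P_m = ∏_{r=0}^{2m} binom(2m, r) satisfies (P_m / p) = (−1)^m. In particular P_m is not divisible by p. -/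
/-!
Each binomial coefficient is `(2m)! / (r! (2m-r)!)`, so `P_m · (∏_{r ≤ 2m} r!)² = ((2m)!)^(2m+1)`
and, the symbol being multiplicative, `(P_m / p) = ((2m)! / p)^(2m+1) = ((2m)! / p)`. By Wilson's
theorem `-1 ≡ (p-1)! ≡ (2m)! · (-1)^(2m) (2m)!`, so `((2m)!)² ≡ -1 (mod p)`, and Euler's criterion
gives `((2m)! / p) ≡ ((2m)!)^(2m) ≡ (-1)^m`.
-/

open Finset Nat

theorem prod_range_choose_mul_superFactorial_sq (n : ℕ) :
    (∏ r ∈ range (n + 1), n.choose r) * (sf n) ^ 2 = n ! ^ (n + 1) := by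
  have reflect : ∏ r ∈ range (n + 1), r ! = ∏ r ∈ range (n + 1), (n - r)! := by
    rw [← prod_range_reflect]
    rfl
  calc (∏ r ∈ range (n + 1), n.choose r) * (sf n) ^ 2
      = ∏ r ∈ range (n + 1), n.choose r * r ! * (n - r)! := by
        rw [← prod_range_succ_factorial, sq, ← mul_assoc]
        nth_rw 2 [reflect]
        rw [← prod_mul_distrib, ← prod_mul_distrib]
    _ = ∏ _r ∈ range (n + 1), n ! :=
        prod_congr rfl fun r hr => choose_mul_factorial_mul_factorial (mem_range_succ_iff.mp hr)
    _ = n ! ^ (n + 1) := by rw [prod_const, card_range]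

namespace ZMod

variable {p : ℕ} [Fact p.Prime]

theorem natCast_factorial_ne_zero {n : ℕ} (hn : n < p) : (n ! : ZMod p) ≠ 0 := by
  rw [Ne, natCast_eq_zero_iff, (Fact.out : p.Prime).dvd_factorial]
  omega

theorem factorial_sq_of_eq_two_mul_add_one {n : ℕ} (hp : p = 2 * n + 1) :
    (n ! : ZMod p) ^ 2 = (-1) ^ (n + 1) := by
  have wilson : (n ! * (p - 1).descFactorial n : ZMod p) = -1 := by
    have h := factorial_mul_descFactorial (n := p - 1) (k := n) (by omega)
    rw [show p - 1 - n = n by omega] at h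
    exact_mod_cast (congrArg (Nat.cast : ℕ → ZMod p) h).trans (wilsons_lemma (p := p))
  rw [cast_descFactorial (by omega)] at wilson
  have sign_sq : ((-1 : ZMod p) ^ n) ^ 2 = 1 := by rw [← pow_mul, mul_comm, pow_mul]; simp
  linear_combination (-1 : ZMod p) ^ n * wilson - (n ! : ZMod p) ^ 2 * sign_sq

end ZMod

theorem legendreSym.pow (p : ℕ) [Fact p.Prime] (a : ℤ) (n : ℕ) :
    legendreSym p (a ^ n) = legendreSym p a ^ n :=
  map_pow (legendreSym.hom p) a n

theorem legendreSym.eq_neg_one_pow_of_pow_eq {p : ℕ} [Fact p.Prime] (hp : p ≠ 2) {a : ℤ} {k : ℕ}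
    (h : (a : ZMod p) ^ (p / 2) = (-1) ^ k) : legendreSym p a = (-1) ^ k := by
  have hp2 : 2 < p := (Fact.out : p.Prime).two_le.lt_of_ne' hp
  have : Fact (2 < p) := ⟨hp2⟩
  have ha : (a : ZMod p) ≠ 0 := by
    rintro h0
    rw [h0, zero_pow (by omega)] at h
    exact pow_ne_zero k (neg_ne_zero.mpr one_ne_zero) h.symm
  have euler := legendreSym.eq_pow p a
  rw [h] at euler
  rcases legendreSym.eq_one_or_neg_one p ha with h1 | h1 <;>
    rcases k.even_or_odd with hk | hk <;> rw [h1, hk.neg_one_pow] at euler ⊢ <;> push_cast at euler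
  · exact absurd euler.symm ZMod.neg_one_ne_one
  · exact absurd euler ZMod.neg_one_ne_one

/-- The Legendre symbol of the product of binomial coefficients
`P_m = ∏_{r=0}^{2m} C(2m, r)` at a prime `p = 4m+1` is `(-1)^m`;
in particular `p ∤ P_m`. -/
theorem stmt_17 (m : ℕ) (p : ℕ) (hpm : p = 4 * m + 1) [Fact p.Prime] :
    legendreSym p (∏ r ∈ Finset.range (2 * m + 1), (Nat.choose (2 * m) r : ℤ))
        = (-1 : ℤ) ^ m ∧
    ¬ ((p : ℤ) ∣ ∏ r ∈ Finset.range (2 * m + 1), (Nat.choose (2 * m) r : ℤ)) := by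
  set P : ℤ := ∏ r ∈ range (2 * m + 1), ((2 * m).choose r : ℤ)
  have hprod : P * ((sf (2 * m) : ℕ) : ℤ) ^ 2 = ((2 * m)! : ℤ) ^ (2 * m + 1) := by
    simp only [P]
    exact_mod_cast prod_range_choose_mul_superFactorial_sq (2 * m)
  have hsf : ((sf (2 * m) : ℤ) : ZMod p) ≠ 0 := by
    rw [Int.cast_natCast, ← prod_range_succ_factorial, Nat.cast_prod]
    exact prod_ne_zero_iff.mpr fun r hr =>
      ZMod.natCast_factorial_ne_zero (by rw [mem_range] at hr; omega)
  have hF : legendreSym p ((2 * m)! : ℤ) = (-1) ^ m := by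
    refine legendreSym.eq_neg_one_pow_of_pow_eq (by omega) ?_
    rw [show p / 2 = 2 * m by omega, pow_mul, Int.cast_natCast,
      ZMod.factorial_sq_of_eq_two_mul_add_one (by omega), pow_succ, pow_mul]
    simp
  have hP : legendreSym p P = (-1) ^ m := by
    have := congrArg (legendreSym p) hprod
    rw [legendreSym.mul, legendreSym.sq_one' p hsf, mul_one, legendreSym.pow, hF] at this
    rw [this, pow_succ, pow_mul, ← pow_mul (-1) m 2, mul_comm m 2,
      pow_mul, neg_one_sq, one_pow, one_pow, one_mul]
  refine ⟨hP, fun hdvd => ?_⟩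
  rw [← ZMod.intCast_zmod_eq_zero_iff_dvd, ← legendreSym.eq_zero_iff, hP] at hdvd
  exact pow_ne_zero m (by norm_num) hdvd
end
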